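/- arXiv:1605.03836 — 3 statements merged into one kernel-verified Lean document; each statement's English description precedes it below -/
import Mathlib

section
/- Let L̃ be a weighted graph, let m ≥ 1, and let I₁,…,I_r be multisets of at most m vertices of L̃. Let π = {π₁,…,π_s} be a partition of the multiset I₁ ⊎ ⋯ ⊎ I_r such that π ∨ {I₁,…,I_r} = {I₁ ⊎ ⋯ ⊎ I_r} (the one-block partition). Then Π_{i=1}^{s} M(L̃[π_i]) ≤ M(L̃^m[{I₁,…,I_r}]), where L̃^m is the m-th power of L̃. -/
open MeasureTheory ProbabilityTheory Filter

noncomputable section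

namespace WDGpaper

/-- The joint cumulant of a finite family of real random variables, defined through
the moment-cumulant formula over set partitions. -/
noncomputable def jointCumulant {Ω : Type*} [MeasurableSpace Ω] (μ : Measure Ω)
    {r : ℕ} (X : Fin r → Ω → ℝ) : ℝ :=
  ∑ π : Finpartition (Finset.univ : Finset (Fin r)),
    (-1 : ℝ) ^ (π.parts.card - 1) * (Nat.factorial (π.parts.card - 1) : ℝ) *
      ∏ B ∈ π.parts, ∫ ω, ∏ i ∈ B, X i ω ∂μ

/-- Symmetrized weight function on unordered pairs, from a function on ordered pairs. -/
noncomputable def edgeWeight {V : Type*} (w : V → V → ℝ) : Sym2 V → ℝ :=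
  Sym2.lift ⟨fun a b => max (w a b) (w b a), fun _ _ => max_comm _ _⟩

/-- `T` is (the edge set of) a spanning tree of the complete graph on `V`. -/
def IsSpanningTree (V : Type*) [Fintype V] [DecidableEq V] (T : Finset (Sym2 V)) : Prop :=
  (∀ e ∈ T, ¬ e.IsDiag) ∧ (SimpleGraph.fromEdgeSet (↑T : Set (Sym2 V))).Connected ∧
    T.card + 1 = Fintype.card V

/-- The maximal weight (product of edge weights) of a spanning tree of the weighted
graph with vertex set `V` and weight function `w`; it equals `0` (the `sSup` of the
empty set) when the weighted graph has no spanning tree, i.e. is disconnected. -/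
noncomputable def treeMax {V : Type*} [Fintype V] [DecidableEq V] (w : V → V → ℝ) : ℝ :=
  sSup {x : ℝ | ∃ T : Finset (Sym2 V), IsSpanningTree V T ∧ x = ∏ e ∈ T, edgeWeight w e}

/-- The weight function of the weighted graph induced (on the multiset of vertices
`{f x : x : β}`, counted with multiplicity) by the weighted graph `w` on `A`:
two copies of the same vertex are linked by weight `1`, and otherwise the weight of
the corresponding edge of `w` is used. -/
noncomputable def inducedW {A β : Type*} [DecidableEq A] (w : A → A → ℝ) (f : β → A) :
    β → β → ℝ :=
  fun x y => if f x = f y then 1 else w (f x) (f y)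

/-- `W({β}, {a 0, …, a (ℓ-1)})`: maximal weight of an edge joining `β` to one of the
`a i`, with the convention that it is `1` if `β` is one of the `a i`,
and `0` (empty `sSup`) if `ℓ = 0`. -/
noncomputable def Wpt {A : Type*} [DecidableEq A] (w : A → A → ℝ) (β : A) {ℓ : ℕ}
    (a : Fin ℓ → A) : ℝ :=
  sSup {x : ℝ | ∃ i : Fin ℓ, x = if β = a i then 1 else w β (a i)}

/-- `w` is a `(Ψ, C)` weighted dependency graph for the family `Y`:
for every multiset `B = {b 0, …, b (r-1)}` of elements of `A` (`r ≥ 1`), the joint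
cumulant of the corresponding variables is bounded by `C r * Ψ B * M(L̃[B])`. -/
def IsWDG {Ω : Type*} [MeasurableSpace Ω] (μ : Measure Ω) {A : Type*} [DecidableEq A]
    (Y : A → Ω → ℝ) (w : A → A → ℝ) (Ψ : Multiset A → ℝ) (C : ℕ → ℝ) : Prop :=
  ∀ r : ℕ, 1 ≤ r → ∀ b : Fin r → A,
    |jointCumulant μ fun i => Y (b i)| ≤
      C r * Ψ (List.ofFn b : Multiset A) * treeMax (inducedW w b)

end WDGpaper

open WDGpaper

/-- The weight function of the `m`-th power graph, restricted to the multisets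
`I 0, …, I (r-1)` (each represented as a tuple of vertices of the weighted graph `w`):
weight `1` if the two multisets share an element, and otherwise the maximal weight of an
edge of `w` joining them. -/
noncomputable def powerTupleW {A : Type*} {r : ℕ} {ℓ : Fin r → ℕ} (w : A → A → ℝ)
    (I : (j : Fin r) → Fin (ℓ j) → A) : Fin r → Fin r → ℝ :=
  fun j k =>
    haveI := Classical.propDecidable
    if ∃ a b, I j a = I k b then 1
    else sSup {x : ℝ | ∃ a b, x = w (I j a) (I k b)}



/-!
Pick an optimal spanning tree in every block. Projecting each block vertex to the multiset `I j`
containing it sends the edges of these trees to a graph on `{I 0, …, I (r-1)}`, which is connected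
because the join of the two partitions is the one-block partition. A spanning tree of that graph
lifts injectively to block-tree edges whose weights are bounded by the power-graph weights of their
images; the remaining block-tree edges have weight at most `1` and can be discarded.
-/

open Finset SimpleGraph Relation

theorem Finset.prod_le_prod_of_exists_preimage {α β R : Type*} [CommSemiring R] [PartialOrder R]
    [IsOrderedRing R] {P : Finset α} {S : Finset β} {F : α → β} {g : α → R} {h : β → R}
    (hg0 : ∀ p ∈ P, 0 ≤ g p) (hg1 : ∀ p ∈ P, g p ≤ 1)
    (hS : ∀ e ∈ S, ∃ p ∈ P, F p = e ∧ g p ≤ h e) :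
    ∏ p ∈ P, g p ≤ ∏ e ∈ S, h e := by
  classical
  choose φ hφP hφF hφh using hS
  have hinj : Set.InjOn (fun e : S => φ e.1 e.2) (S.attach : Set S) := fun e _ e' _ he =>
    Subtype.ext (by rw [← hφF e.1 e.2, ← hφF e'.1 e'.2]; exact congrArg F he)
  calc ∏ p ∈ P, g p ≤ ∏ p ∈ S.attach.image (fun e => φ e.1 e.2), g p :=
        prod_le_prod_of_subset_of_le_one (image_subset_iff.2 fun e _ => hφP _ _) hg0
          fun p hp _ => hg1 p hp
    _ = ∏ e ∈ S.attach, g (φ e.1 e.2) := prod_image hinj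
    _ ≤ ∏ e ∈ S.attach, h e := prod_le_prod (fun e _ => hg0 _ (hφP _ _)) fun e _ => hφh _ _
    _ = ∏ e ∈ S, h e := prod_attach S h

theorem SimpleGraph.Reachable.map_fromEdgeSet {V U : Type*} {T : Set (Sym2 V)}
    {E : Set (Sym2 U)} (f : V → U) (hTE : ∀ e ∈ T, e.map f ∈ E) {x y : V}
    (h : (fromEdgeSet T).Reachable x y) :
    (fromEdgeSet E).Reachable (f x) (f y) := by
  rw [reachable_iff_reflTransGen] at h ⊢
  refine ReflTransGen.lift' f (fun a b hab => ?_) _ _ h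
  change ReflTransGen _ (f a) (f b)
  by_cases hf : f a = f b
  · exact hf ▸ ReflTransGen.refl
  · exact .single ((fromEdgeSet_adj _).2 ⟨hTE _ ((fromEdgeSet_adj _).1 hab).1, hf⟩)

namespace WDGpaper

variable {V U : Type*}

lemma edgeWeight_nonneg {w : V → V → ℝ} (hw : ∀ a b, 0 ≤ w a b) (e : Sym2 V) :
    0 ≤ edgeWeight w e := by
  induction e using Sym2.ind with
  | _ a b => exact le_max_of_le_left (hw a b)

lemma edgeWeight_le_one {w : V → V → ℝ} (hw : ∀ a b, w a b ≤ 1) (e : Sym2 V) :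
    edgeWeight w e ≤ 1 := by
  induction e using Sym2.ind with
  | _ a b => exact max_le (hw a b) (hw b a)

lemma edgeWeight_le_edgeWeight_map {w : V → V → ℝ} {w' : U → U → ℝ} (f : V → U)
    (h : ∀ a b, w a b ≤ w' (f a) (f b)) (e : Sym2 V) :
    edgeWeight w e ≤ edgeWeight w' (e.map f) := by
  induction e using Sym2.ind with
  | _ a b => exact max_le_max (h a b) (h b a)

section TreeMax

variable [Fintype V] [DecidableEq V]

lemma isSpanningTree_edgeFinset {H : SimpleGraph V} [Fintype H.edgeSet] (hH : H.IsTree) :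
    IsSpanningTree V H.edgeFinset := by
  refine ⟨fun e he => H.not_isDiag_of_mem_edgeSet (mem_edgeFinset.mp he), ?_,
    hH.card_edgeFinset⟩
  rw [coe_edgeFinset, fromEdgeSet_edgeSet]
  exact hH.connected

lemma exists_isSpanningTree_subset_edgeSet {G : SimpleGraph V} (hG : G.Connected) :
    ∃ T : Finset (Sym2 V), IsSpanningTree V T ∧ ↑T ⊆ G.edgeSet := by
  classical
  obtain ⟨H, hHG, hH⟩ := hG.exists_isTree_le
  exact ⟨H.edgeFinset, isSpanningTree_edgeFinset hH, by simpa using edgeSet_mono hHG⟩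

lemma finite_spanningTreeWeights (w : V → V → ℝ) :
    {x : ℝ | ∃ T : Finset (Sym2 V), IsSpanningTree V T ∧ x = ∏ e ∈ T, edgeWeight w e}.Finite :=
  (Set.finite_range fun T : Finset (Sym2 V) => ∏ e ∈ T, edgeWeight w e).subset
    (by rintro _ ⟨T, -, rfl⟩; exact ⟨T, rfl⟩)

lemma prod_edgeWeight_le_treeMax {w : V → V → ℝ} {T : Finset (Sym2 V)}
    (hT : IsSpanningTree V T) : ∏ e ∈ T, edgeWeight w e ≤ treeMax w :=
  le_csSup (finite_spanningTreeWeights w).bddAbove ⟨T, hT, rfl⟩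

lemma treeMax_nonneg {w : V → V → ℝ} (hw : ∀ a b, 0 ≤ w a b) : 0 ≤ treeMax w :=
  Real.sSup_nonneg <| by
    rintro _ ⟨T, -, rfl⟩
    exact prod_nonneg fun e _ => edgeWeight_nonneg hw e

/-- On an empty vertex type there is no spanning tree, so `treeMax w = 0` (an empty `sSup`) and
the empty edge set does the job. -/
lemma exists_preconnected_treeMax_le_prod (w : V → V → ℝ) :
    ∃ T : Finset (Sym2 V), (fromEdgeSet (T : Set (Sym2 V))).Preconnected ∧
      treeMax w ≤ ∏ e ∈ T, edgeWeight w e := by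
  rcases isEmpty_or_nonempty V with _ | _
  · have hnone : ∀ T, ¬ IsSpanningTree V T := fun T hT => by
      simpa [Fintype.card_eq_zero] using hT.2.2
    refine ⟨∅, fun x => isEmptyElim x, ?_⟩
    simp [treeMax, hnone]
  · obtain ⟨T₀, hT₀, -⟩ := exists_isSpanningTree_subset_edgeSet (connected_top (V := V))
    obtain ⟨T, hT, hmax⟩ : treeMax w ∈
        {x : ℝ | ∃ T : Finset (Sym2 V), IsSpanningTree V T ∧ x = ∏ e ∈ T, edgeWeight w e} :=
      Set.Nonempty.csSup_mem ⟨_, T₀, hT₀, rfl⟩ (finite_spanningTreeWeights w)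
    exact ⟨T, hT.2.1.preconnected, hmax.le⟩

end TreeMax

lemma connected_fromEdgeSet_iUnion_map {ι X : Type*} [Nonempty U] {π : X → U}
    (hπ : Function.Surjective π) {Δ : ι → Finset X} {T : (i : ι) → Set (Sym2 (Δ i))}
    (hT : ∀ i, (fromEdgeSet (T i)).Preconnected)
    (hjoin : ∀ u v, ReflTransGen (fun a b => (∃ i, a ∈ Δ i ∧ b ∈ Δ i) ∨ π a = π b) u v) :
    (fromEdgeSet (⋃ i, Sym2.map (fun x => π x.1) '' T i)).Connected := by
  refine ⟨fun j k => ?_⟩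
  obtain ⟨u, rfl⟩ := hπ j
  obtain ⟨v, rfl⟩ := hπ k
  rw [reachable_iff_reflTransGen]
  refine ReflTransGen.lift' π (fun a b hab => ?_) _ _ (hjoin u v)
  change ReflTransGen _ (π a) (π b)
  rcases hab with ⟨i, ha, hb⟩ | hab
  · rw [← reachable_iff_reflTransGen]
    refine (hT i ⟨a, ha⟩ ⟨b, hb⟩).map_fromEdgeSet (fun x : Δ i => π x.1) fun e he => ?_
    exact Set.mem_iUnion.2 ⟨i, e, he, rfl⟩
  · exact hab ▸ ReflTransGen.refl

theorem prod_prod_edgeWeight_le_treeMax [Fintype U] [DecidableEq U] {ι : Type*} [Fintype ι]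
    {V : ι → Type*} {w : (i : ι) → V i → V i → ℝ} {w' : U → U → ℝ} (f : (i : ι) → V i → U)
    (hw0 : ∀ i a b, 0 ≤ w i a b) (hw1 : ∀ i a b, w i a b ≤ 1)
    (hle : ∀ i a b, w i a b ≤ w' (f i a) (f i b)) (T : (i : ι) → Finset (Sym2 (V i)))
    (hconn : (fromEdgeSet (⋃ i, Sym2.map (f i) '' (T i : Set (Sym2 (V i))))).Connected) :
    ∏ i, ∏ e ∈ T i, edgeWeight (w i) e ≤ treeMax w' := by
  obtain ⟨S, hS, hSG⟩ := exists_isSpanningTree_subset_edgeSet hconn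
  calc ∏ i, ∏ e ∈ T i, edgeWeight (w i) e
      = ∏ p ∈ univ.sigma T, edgeWeight (w p.1) p.2 :=
        (prod_sigma univ T fun p => edgeWeight (w p.1) p.2).symm
    _ ≤ ∏ e ∈ S, edgeWeight w' e := by
      refine prod_le_prod_of_exists_preimage (F := fun p => p.2.map (f p.1))
        (fun p _ => edgeWeight_nonneg (hw0 p.1) p.2) (fun p _ => edgeWeight_le_one (hw1 p.1) p.2)
        fun e he => ?_
      have he' : e ∈ ⋃ i, Sym2.map (f i) '' (T i : Set (Sym2 (V i))) :=
        (edgeSet_fromEdgeSet _ ▸ hSG he).1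
      obtain ⟨i, p, hp, rfl⟩ := Set.mem_iUnion.1 he'
      exact ⟨⟨i, p⟩, mem_sigma.2 ⟨mem_univ i, hp⟩, rfl, edgeWeight_le_edgeWeight_map _ (hle i) p⟩
    _ ≤ treeMax w' := prod_edgeWeight_le_treeMax hS

section Induced

variable {A β : Type*} [DecidableEq A] {w : A → A → ℝ}

lemma inducedW_nonneg (hw : ∀ a b, 0 ≤ w a b) (f : β → A) (x y : β) :
    0 ≤ inducedW w f x y := by
  unfold inducedW
  split_ifs
  exacts [zero_le_one, hw _ _]

lemma inducedW_le_one (hw : ∀ a b, w a b ≤ 1) (f : β → A) (x y : β) :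
    inducedW w f x y ≤ 1 := by
  unfold inducedW
  split_ifs
  exacts [le_rfl, hw _ _]

end Induced

end WDGpaper

open WDGpaper

lemma inducedW_le_powerTupleW {A : Type*} [DecidableEq A] {r : ℕ} {ℓ : Fin r → ℕ}
    {w : A → A → ℝ} (hw : ∀ a b, w a b ≤ 1) (I : (j : Fin r) → Fin (ℓ j) → A)
    (x y : (j : Fin r) × Fin (ℓ j)) :
    inducedW w (fun z => I z.1 z.2) x y ≤ powerTupleW w I x.1 y.1 := by
  unfold inducedW powerTupleW
  by_cases hxy : I x.1 x.2 = I y.1 y.2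
  · rw [if_pos hxy, if_pos ⟨x.2, y.2, hxy⟩]
  rw [if_neg hxy]
  split_ifs
  · exact hw _ _
  · refine le_csSup ⟨1, ?_⟩ ⟨x.2, y.2, rfl⟩
    rintro _ ⟨a, b, rfl⟩
    exact hw _ _

theorem prod_treeMax_blocks_le_treeMax_power_general
    {A : Type*} [DecidableEq A] (w : A → A → ℝ)
    (hw0 : ∀ a b, 0 ≤ w a b) (hw1 : ∀ a b, w a b ≤ 1)
    (m : ℕ) (r : ℕ) (hr : 1 ≤ r)
    (ℓ : Fin r → ℕ) (hℓ : ∀ j, 1 ≤ ℓ j ∧ ℓ j ≤ m)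
    (I : (j : Fin r) → Fin (ℓ j) → A)
    (s : ℕ) (Δ : Fin s → Finset ((j : Fin r) × Fin (ℓ j)))
    (hjoin : ∀ u v : (j : Fin r) × Fin (ℓ j),
      Relation.ReflTransGen (fun a b => (∃ i, a ∈ Δ i ∧ b ∈ Δ i) ∨ a.1 = b.1) u v) :
    ∏ i : Fin s, treeMax (inducedW w (fun x : {y // y ∈ Δ i} => I x.1.1 x.1.2))
      ≤ treeMax (powerTupleW w I) := by
  choose T hTconn hTmax using fun i =>
    exists_preconnected_treeMax_le_prod (inducedW w (fun x : {y // y ∈ Δ i} => I x.1.1 x.1.2))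
  have : Nonempty (Fin r) := ⟨⟨0, hr⟩⟩
  have hfst : Function.Surjective (Sigma.fst : ((j : Fin r) × Fin (ℓ j)) → Fin r) :=
    fun j => ⟨⟨j, ⟨0, (hℓ j).1⟩⟩, rfl⟩
  calc ∏ i, treeMax (inducedW w (fun x : {y // y ∈ Δ i} => I x.1.1 x.1.2))
      ≤ ∏ i, ∏ e ∈ T i, edgeWeight (inducedW w (fun x : {y // y ∈ Δ i} => I x.1.1 x.1.2)) e :=
        prod_le_prod (fun i _ => treeMax_nonneg (inducedW_nonneg hw0 _)) fun i _ => hTmax i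
    _ ≤ treeMax (powerTupleW w I) :=
        prod_prod_edgeWeight_le_treeMax (fun _ x => x.1.1) (fun _ => inducedW_nonneg hw0 _)
          (fun _ => inducedW_le_one hw1 _) (fun _ x y => inducedW_le_powerTupleW hw1 I x.1 y.1) T
          (connected_fromEdgeSet_iUnion_map hfst hTconn hjoin)

/-- For multisets `I 0, …, I (r-1)` of at most `m` vertices of a weighted
graph `w`, and a partition `Δ` of the disjoint union `I 0 ⊎ ⋯ ⊎ I (r-1)` whose join with
`{I 0, …, I (r-1)}` is the one-block partition, the product of the maximal spanning tree
weights of the graphs induced on the blocks is at most the maximal spanning tree weight of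
the graph induced by the `m`-th power graph on `{I 0, …, I (r-1)}`. -/
theorem prod_treeMax_blocks_le_treeMax_power
    {A : Type*} [DecidableEq A] (w : A → A → ℝ)
    (hsym : ∀ a b, w a b = w b a) (hw0 : ∀ a b, 0 ≤ w a b) (hw1 : ∀ a b, w a b ≤ 1)
    (m : ℕ) (hm : 1 ≤ m) (r : ℕ) (hr : 1 ≤ r)
    (ℓ : Fin r → ℕ) (hℓ : ∀ j, 1 ≤ ℓ j ∧ ℓ j ≤ m)
    (I : (j : Fin r) → Fin (ℓ j) → A)
    (s : ℕ) (Δ : Fin s → Finset ((j : Fin r) × Fin (ℓ j)))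
    (hne : ∀ i, (Δ i).Nonempty)
    (hdisj : ∀ i i', i ≠ i' → Disjoint (Δ i) (Δ i'))
    (hcover : ∀ x, ∃ i, x ∈ Δ i)
    (hjoin : ∀ u v : (j : Fin r) × Fin (ℓ j),
      Relation.ReflTransGen (fun a b => (∃ i, a ∈ Δ i ∧ b ∈ Δ i) ∨ a.1 = b.1) u v) :
    ∏ i : Fin s, treeMax (inducedW w (fun x : {y // y ∈ Δ i} => I x.1.1 x.1.2))
      ≤ treeMax (powerTupleW w I) :=
  prod_treeMax_blocks_le_treeMax_power_general w hw0 hw1 m r hr ℓ hℓ I s Δ hjoin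
end
end

section
/- Let L̃ be a (Ψ,C) weighted dependency graph for a family {Y_α, α ∈ A} of random variables (A finite). Define R = Σ_{α∈A} Ψ({α}) and, for ℓ ≥ 1, T_ℓ = max_{α₁,…,α_ℓ ∈ A} Σ_{β∈A} W({β},{α₁,…,α_ℓ}) · Ψ({α₁,…,α_ℓ,β})/Ψ({α₁,…,α_ℓ}). Then for every r ≥ 1, |κ_r(Σ_{α∈A} Y_α)| ≤ C_r · r! · R · T₁ ⋯ T_{r−1}, where κ_r denotes the r-th cumulant. -/
/-!
Expanding `κ_r(∑ Y_α)` by multilinearity gives `∑_f κ(Y_{f 0}, …, Y_{f (r-1)})` over all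
`f : Fin r → A`, and each term is bounded by the weighted dependency graph inequality. The
vertices of a spanning tree of `L̃[f]` can be listed as `σ 0, σ 1, …` so that every `σ k`,
`k ≥ 1`, is joined to an earlier vertex; hence the tree weighs at most
`∏_{k ≥ 1} W({g k}, {g 0, …, g (k-1)})` with `g = f ∘ σ`, and summing over `σ` costs `r!`.
Finally, summing `Ψ(g) ∏_k W(…)` over `g` one coordinate at a time, appending `β` to `g`
multiplies the summand by `W({β}, g) Ψ(g + β) / Ψ(g)`, whose sum over `β` is at most `T_ℓ`;
this telescopes to `R T₁ ⋯ T_{r-1}`.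
-/

open MeasureTheory ProbabilityTheory Filter

noncomputable section

open WDGpaper

open Finset

theorem Finpartition.prod_sum_eq_sum_prod {ι A R : Type*} [Fintype ι] [DecidableEq ι]
    [Fintype A] [CommSemiring R] (π : Finpartition (univ : Finset ι))
    (F : (B : Finset ι) → (B → A) → R) :
    ∏ B ∈ π.parts, ∑ g : B → A, F B g = ∑ f : ι → A, ∏ B ∈ π.parts, F B (fun i => f i) := by
  rw [← prod_coe_sort, Fintype.prod_sum]
  refine (Fintype.sum_bijective (fun f (B : π.parts) (i : (B : Finset ι)) => f i)
    ⟨fun f f' h => ?_, fun G => ?_⟩ _ _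
    fun f => (prod_coe_sort π.parts fun B => F B fun i => f i).symm).symm
  · funext i
    exact congrFun (congrFun h ⟨_, π.part_mem.2 (mem_univ i)⟩) ⟨i, π.mem_part_self.2 (mem_univ i)⟩
  · refine ⟨fun i => G ⟨_, π.part_mem.2 (mem_univ i)⟩ ⟨i, π.mem_part_self.2 (mem_univ i)⟩, ?_⟩
    funext ⟨B, hB⟩ ⟨i, hi⟩
    obtain rfl := π.part_eq_of_mem hB hi
    rfl

theorem SimpleGraph.Connected.exists_injective_fin_adj_pred {V : Type*} [Fintype V]
    {G : SimpleGraph V} (hG : G.Connected) {n : ℕ} (hn : n < Fintype.card V) :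
    ∃ v : Fin (n + 1) → V, Function.Injective v ∧
      ∀ k : Fin n, ∃ j < k.succ, G.Adj (v j) (v k.succ) := by
  induction n with
  | zero =>
    exact ⟨fun _ => hG.nonempty.some, fun a b _ => Subsingleton.elim (α := Fin 1) a b,
      fun k => k.elim0⟩
  | succ n ih =>
    obtain ⟨v, hv_inj, hv_adj⟩ := ih (by omega)
    obtain ⟨x, hx⟩ : ∃ x, x ∉ Set.range v := by
      by_contra! h
      have := Fintype.card_le_of_surjective v fun x => h x
      simp only [Fintype.card_fin] at this
      omega
    obtain ⟨p⟩ := hG.preconnected (v 0) x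
    obtain ⟨d, -, ⟨j, hj⟩, hd⟩ := p.exists_boundary_dart (Set.range v) ⟨0, rfl⟩ hx
    refine ⟨Fin.snoc v d.snd, Fin.snoc_injective_of_injective hv_inj hd, fun k => ?_⟩
    induction k using Fin.lastCases with
    | last =>
      refine ⟨j.castSucc, by simp [Fin.castSucc_lt_last], ?_⟩
      simp [hj, d.adj]
    | cast k =>
      obtain ⟨i, hi, hadj⟩ := hv_adj k
      refine ⟨i.castSucc, ?_, ?_⟩
      · rwa [Fin.succ_castSucc, Fin.castSucc_lt_castSucc_iff]
      · rwa [Fin.succ_castSucc, Fin.snoc_castSucc, Fin.snoc_castSucc]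

theorem SimpleGraph.Connected.exists_equiv_fin_adj_pred {V : Type*} [Fintype V]
    {G : SimpleGraph V} (hG : G.Connected) {m : ℕ} (hV : Fintype.card V = m + 1) :
    ∃ v : Fin (m + 1) ≃ V, ∀ k : Fin m, ∃ j < k.succ, G.Adj (v j) (v k.succ) := by
  obtain ⟨v, hv_inj, hv_adj⟩ := hG.exists_injective_fin_adj_pred (n := m) (by omega)
  have hv : Function.Bijective v :=
    (Fintype.bijective_iff_injective_and_card v).2 ⟨hv_inj, by simp [hV]⟩
  exact ⟨Equiv.ofBijective v hv, hv_adj⟩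

theorem Fintype.sum_sum_perm_comp {ι A M : Type*} [Fintype ι] [DecidableEq ι] [Fintype A]
    [AddCommMonoid M] (F : (ι → A) → M) :
    ∑ f : ι → A, ∑ σ : Equiv.Perm ι, F (f ∘ σ) = (Fintype.card ι).factorial • ∑ g, F g := by
  rw [sum_comm]
  calc ∑ σ : Equiv.Perm ι, ∑ f : ι → A, F (f ∘ σ) = ∑ _σ : Equiv.Perm ι, ∑ g, F g :=
        Fintype.sum_congr _ _ fun σ =>
          Fintype.sum_equiv (σ.symm.arrowCongr (.refl A)) _ _ fun _ => rfl
    _ = _ := by rw [sum_const, card_univ, Fintype.card_perm]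

theorem Multiset.coe_ofFn_snoc {A : Type*} {m : ℕ} (g : Fin m → A) (β : A) :
    (List.ofFn (Fin.snoc g β : Fin (m + 1) → A) : Multiset A) =
      (List.ofFn g : Multiset A) + {β} := by
  rw [List.ofFn_succ']
  simp only [Fin.snoc_castSucc, Fin.snoc_last, List.concat_eq_append]
  rfl

namespace WDGpaper

section Expansion

variable {Ω : Type*} [MeasurableSpace Ω] {μ : Measure Ω} {A : Type*} {Y : A → Ω → ℝ}

theorem integrable_prod_of_forall_fin
    (hint : ∀ (k : ℕ) (b : Fin k → A), Integrable (fun ω => ∏ i, Y (b i) ω) μ)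
    {ι : Type*} [Fintype ι] (b : ι → A) : Integrable (fun ω => ∏ i, Y (b i) ω) μ := by
  let e := Fintype.equivFin ι
  convert hint _ (b ∘ e.symm) using 2 with ω
  exact (e.symm.prod_comp fun i => Y (b i) ω).symm

variable [Fintype A]

theorem integral_prod_sum
    (hint : ∀ (k : ℕ) (b : Fin k → A), Integrable (fun ω => ∏ i, Y (b i) ω) μ)
    {ι : Type*} [Fintype ι] [DecidableEq ι] :
    ∫ ω, ∏ _ : ι, ∑ α, Y α ω ∂μ = ∑ g : ι → A, ∫ ω, ∏ i, Y (g i) ω ∂μ := by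
  simp_rw [Fintype.prod_sum]
  exact integral_finsetSum _ fun g _ => integrable_prod_of_forall_fin hint g

theorem jointCumulant_sum
    (hint : ∀ (k : ℕ) (b : Fin k → A), Integrable (fun ω => ∏ i, Y (b i) ω) μ) (r : ℕ) :
    jointCumulant μ (fun _ : Fin r => fun ω => ∑ α, Y α ω) =
      ∑ f : Fin r → A, jointCumulant μ (fun i => Y (f i)) := by
  simp only [jointCumulant]
  rw [sum_comm]
  refine sum_congr rfl fun π _ => ?_
  rw [← mul_sum]
  congr 1
  calc ∏ B ∈ π.parts, ∫ ω, ∏ _ ∈ B, ∑ α, Y α ω ∂μ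
      = ∏ B ∈ π.parts, ∑ g : B → A, ∫ ω, ∏ i, Y (g i) ω ∂μ := by
        refine prod_congr rfl fun B _ => ?_
        simp_rw [← prod_coe_sort B]
        exact integral_prod_sum hint
    _ = ∑ f : Fin r → A, ∏ B ∈ π.parts, ∫ ω, ∏ i ∈ B, Y (f i) ω ∂μ := by
        rw [π.prod_sum_eq_sum_prod]
        exact sum_congr rfl fun f _ => prod_congr rfl fun B _ =>
          congrArg (integral μ) (funext fun ω => prod_coe_sort B fun i => Y (f i) ω)

end Expansion

theorem IsSpanningTree.exists_eq_image_parent {V : Type*} [Fintype V] [DecidableEq V]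
    {T : Finset (Sym2 V)} (hT : IsSpanningTree V T) {m : ℕ} (hV : Fintype.card V = m + 1) :
    ∃ (v : Fin (m + 1) ≃ V) (p : Fin m → Fin (m + 1)), (∀ k, p k < k.succ) ∧
      Function.Injective (fun k => s(v (p k), v k.succ)) ∧
      T = univ.image (fun k => s(v (p k), v k.succ)) := by
  obtain ⟨v, hv⟩ := hT.2.1.exists_equiv_fin_adj_pred hV
  choose p hp hadj using hv
  have hinj : Function.Injective (fun k => s(v (p k), v k.succ)) := by
    intro a b hab
    rcases Sym2.eq_iff.1 hab with ⟨-, h⟩ | ⟨h₁, h₂⟩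
    · exact Fin.succ_injective _ (v.injective h)
    · have h₁' := hp a
      have h₂' := hp b
      rw [v.injective h₁] at h₁'
      rw [← v.injective h₂] at h₂'
      exact absurd (h₁'.trans h₂') (lt_irrefl _)
  refine ⟨v, p, hp, hinj, (eq_of_subset_of_card_le ?_ ?_).symm⟩
  · simp only [image_subset_iff, mem_univ, forall_const]
    exact fun k => ((SimpleGraph.fromEdgeSet_adj _).1 (hadj k)).1
  · rw [card_image_of_injective _ hinj, card_univ, Fintype.card_fin]
    have := hT.2.2
    omega

section Weights

variable {A : Type*} [DecidableEq A] {w : A → A → ℝ}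

theorem le_Wpt (β : A) {ℓ : ℕ} (a : Fin ℓ → A) (i : Fin ℓ) :
    (if β = a i then 1 else w β (a i)) ≤ Wpt w β a :=
  le_csSup ((Set.finite_range fun i => if β = a i then (1 : ℝ) else w β (a i)).bddAbove.mono
    (by rintro _ ⟨i, rfl⟩; exact ⟨i, rfl⟩)) ⟨i, rfl⟩

theorem Wpt_nonneg (hw0 : ∀ a b, 0 ≤ w a b) (β : A) {ℓ : ℕ} (a : Fin (ℓ + 1) → A) :
    0 ≤ Wpt w β a := by
  refine le_trans ?_ (le_Wpt β a 0)
  split_ifs <;> simp [hw0]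

theorem edgeWeight_inducedW_nonneg (hw0 : ∀ a b, 0 ≤ w a b) {V : Type*} (g : V → A)
    (e : Sym2 V) : 0 ≤ edgeWeight (inducedW w g) e := by
  induction e using Sym2.ind with
  | _ x y => exact le_max_of_le_left (by unfold inducedW; split_ifs <;> simp [hw0])

theorem edgeWeight_inducedW_mk (hsym : ∀ a b, w a b = w b a) {V : Type*} (g : V → A)
    (x y : V) : edgeWeight (inducedW w g) s(x, y) = if g y = g x then 1 else w (g y) (g x) := by
  simp only [edgeWeight, Sym2.lift_mk, inducedW, hsym (g x), eq_comm (a := g x), max_self]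

/-- `∏_{k ≥ 1} W({g k}, {g 0, …, g (k-1)})`: it bounds the weight of every spanning tree of
`L̃[g]` in which each vertex `k ≥ 1` is joined to an earlier one. -/
def prefixWeight (w : A → A → ℝ) {m : ℕ} (g : Fin (m + 1) → A) : ℝ :=
  ∏ k : Fin m, Wpt w (g k.succ) (Fin.take (k + 1) (by omega) g)

theorem prefixWeight_nonneg (hw0 : ∀ a b, 0 ≤ w a b) {m : ℕ} (g : Fin (m + 1) → A) :
    0 ≤ prefixWeight w g :=
  prod_nonneg fun _ _ => Wpt_nonneg hw0 _ _

theorem prefixWeight_snoc {m : ℕ} (g : Fin (m + 1) → A) (β : A) :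
    prefixWeight w (Fin.snoc g β : Fin (m + 2) → A) = prefixWeight w g * Wpt w β g := by
  rw [prefixWeight, Fin.prod_univ_castSucc]
  congr 1
  · refine prod_congr rfl fun k _ => ?_
    rw [Fin.succ_castSucc, Fin.snoc_castSucc]
    congr 1
    ext j
    exact Fin.snoc_castSucc (α := fun _ => A) (i := Fin.castLE (by omega) j) ..
  · simp

theorem treeMax_inducedW_le_sum_prefixWeight (hsym : ∀ a b, w a b = w b a)
    (hw0 : ∀ a b, 0 ≤ w a b) {m : ℕ} (f : Fin (m + 1) → A) :
    treeMax (inducedW w f) ≤ ∑ σ : Equiv.Perm (Fin (m + 1)), prefixWeight w (f ∘ σ) := by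
  have hP : ∀ σ : Equiv.Perm (Fin (m + 1)), 0 ≤ prefixWeight w (f ∘ σ) :=
    fun σ => prefixWeight_nonneg hw0 _
  refine Real.sSup_le ?_ (sum_nonneg fun σ _ => hP σ)
  rintro _ ⟨T, hT, rfl⟩
  obtain ⟨σ, p, hp, hinj, rfl⟩ := hT.exists_eq_image_parent (Fintype.card_fin _)
  calc ∏ e ∈ univ.image (fun k : Fin m => s(σ (p k), σ k.succ)), edgeWeight (inducedW w f) e
      = ∏ k, edgeWeight (inducedW w f) s(σ (p k), σ k.succ) := prod_image hinj.injOn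
    _ ≤ prefixWeight w (f ∘ σ) := by
        refine prod_le_prod (fun _ _ => edgeWeight_inducedW_nonneg hw0 _ _) fun k _ => ?_
        rw [edgeWeight_inducedW_mk hsym]
        exact le_Wpt (w := w) (f (σ k.succ)) (Fin.take (k + 1) (by omega) (f ∘ σ)) ⟨p k, hp k⟩
    _ ≤ _ := single_le_sum (fun σ _ => hP σ) (mem_univ σ)

end Weights

section Telescoping

variable {A : Type*} [Fintype A] [DecidableEq A] {w : A → A → ℝ} {Ψ : Multiset A → ℝ}

def extensionWeight (w : A → A → ℝ) (Ψ : Multiset A → ℝ) {ℓ : ℕ} (a : Fin ℓ → A) : ℝ :=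
  ∑ β, Wpt w β a * (Ψ ((List.ofFn a : Multiset A) + {β}) / Ψ (List.ofFn a : Multiset A))

theorem extensionWeight_nonneg (hw0 : ∀ a b, 0 ≤ w a b) (hΨ : ∀ B, 0 < Ψ B) {ℓ : ℕ}
    (a : Fin (ℓ + 1) → A) : 0 ≤ extensionWeight w Ψ a :=
  sum_nonneg fun β _ => mul_nonneg (Wpt_nonneg hw0 β a) (div_pos (hΨ _) (hΨ _)).le

theorem sum_mul_prefixWeight_le (hw0 : ∀ a b, 0 ≤ w a b) (hΨ : ∀ B, 0 < Ψ B) {T : ℕ → ℝ}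
    (hT0 : ∀ ℓ, 0 ≤ T (ℓ + 1))
    (hT : ∀ ℓ (a : Fin (ℓ + 1) → A), extensionWeight w Ψ a ≤ T (ℓ + 1))
    (m : ℕ) :
    ∑ g : Fin (m + 1) → A, Ψ (List.ofFn g : Multiset A) * prefixWeight w g ≤
      (∑ α, Ψ {α}) * ∏ ℓ ∈ Ico 1 (m + 1), T ℓ := by
  induction m with
  | zero =>
    refine le_of_eq ?_
    simp only [zero_add, Ico_self, prod_empty, mul_one, prefixWeight, univ_eq_empty]
    exact Fintype.sum_equiv (Equiv.funUnique (Fin 1) A) _ _ fun g => by simp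
  | succ m ih =>
    calc ∑ g : Fin (m + 1 + 1) → A, Ψ (List.ofFn g : Multiset A) * prefixWeight w g
        = ∑ g : Fin (m + 1) → A,
            Ψ (List.ofFn g : Multiset A) * prefixWeight w g * extensionWeight w Ψ g := by
          rw [← (Fin.snocEquiv fun _ => A).sum_comp, Fintype.sum_prod_type, sum_comm]
          refine sum_congr rfl fun g _ => ?_
          rw [extensionWeight, mul_sum]
          refine sum_congr rfl fun β _ => ?_
          change Ψ (List.ofFn (Fin.snoc g β : Fin (m + 1 + 1) → A) : Multiset A) *
            prefixWeight w (Fin.snoc g β : Fin (m + 1 + 1) → A) = _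
          rw [Multiset.coe_ofFn_snoc, prefixWeight_snoc]
          have hΨg := (hΨ (List.ofFn g : Multiset A)).ne'
          field_simp
      _ ≤ ∑ g : Fin (m + 1) → A, Ψ (List.ofFn g : Multiset A) * prefixWeight w g * T (m + 1) :=
          sum_le_sum fun g _ => mul_le_mul_of_nonneg_left (hT m g)
            (mul_nonneg (hΨ _).le (prefixWeight_nonneg hw0 g))
      _ ≤ (∑ α, Ψ {α}) * (∏ ℓ ∈ Ico 1 (m + 1), T ℓ) * T (m + 1) := by
          rw [← sum_mul]
          exact mul_le_mul_of_nonneg_right ih (hT0 m)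
      _ = (∑ α, Ψ {α}) * ∏ ℓ ∈ Ico 1 (m + 1 + 1), T ℓ := by
          rw [prod_Ico_succ_top (by omega : 1 ≤ m + 1), mul_assoc]

end Telescoping

end WDGpaper

theorem cumulant_sum_le_of_isWDG_general
    {Ω : Type*} [MeasurableSpace Ω] (μ : Measure Ω)
    {A : Type*} [Fintype A] [DecidableEq A]
    (Y : A → Ω → ℝ)
    (hint : ∀ (k : ℕ) (b : Fin k → A), Integrable (fun ω => ∏ i, Y (b i) ω) μ)
    (w : A → A → ℝ) (hsym : ∀ a b, w a b = w b a)
    (hw0 : ∀ a b, 0 ≤ w a b)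
    (Ψ : Multiset A → ℝ) (hΨ : ∀ B, 0 < Ψ B)
    (C : ℕ → ℝ) (hC : ∀ k, 0 < C k)
    (hWDG : IsWDG μ Y w Ψ C)
    (R : ℝ) (hR : R = ∑ α : A, Ψ {α})
    (T : ℕ → ℝ)
    (hT : ∀ ℓ : ℕ, 1 ≤ ℓ → T ℓ = ⨆ a : Fin ℓ → A, ∑ β : A,
        Wpt w β a * (Ψ ((List.ofFn a : Multiset A) + {β}) / Ψ (List.ofFn a : Multiset A)))
    (r : ℕ) (hr : 1 ≤ r) :
    |jointCumulant μ (fun _ : Fin r => fun ω => ∑ α : A, Y α ω)| ≤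
      C r * (Nat.factorial r : ℝ) * R * ∏ ℓ ∈ Finset.Ico 1 r, T ℓ := by
  obtain ⟨m, rfl⟩ := Nat.exists_eq_add_of_le' hr
  have hT_eq (ℓ : ℕ) : T (ℓ + 1) = ⨆ a : Fin (ℓ + 1) → A, extensionWeight w Ψ a :=
    hT _ (by omega)
  have hT_le (ℓ : ℕ) (a : Fin (ℓ + 1) → A) : extensionWeight w Ψ a ≤ T (ℓ + 1) :=
    (hT_eq ℓ).symm ▸ le_ciSup (Finite.bddAbove_range _) a
  have hT0 (ℓ : ℕ) : 0 ≤ T (ℓ + 1) :=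
    (hT_eq ℓ).symm ▸ Real.iSup_nonneg fun a => extensionWeight_nonneg hw0 hΨ a
  rw [jointCumulant_sum hint]
  calc |∑ f : Fin (m + 1) → A, jointCumulant μ fun i => Y (f i)|
      ≤ ∑ f : Fin (m + 1) → A, C (m + 1) * (Ψ (List.ofFn f : Multiset A) *
          ∑ σ : Equiv.Perm (Fin (m + 1)), prefixWeight w (f ∘ σ)) := by
        refine (abs_sum_le_sum_abs _ _).trans (sum_le_sum fun f _ => (hWDG _ hr f).trans ?_)
        rw [mul_assoc]
        exact mul_le_mul_of_nonneg_left (mul_le_mul_of_nonneg_left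
          (treeMax_inducedW_le_sum_prefixWeight hsym hw0 f) (hΨ _).le) (hC _).le
    _ = C (m + 1) * ∑ f : Fin (m + 1) → A, ∑ σ : Equiv.Perm (Fin (m + 1)),
          Ψ (List.ofFn (f ∘ σ) : Multiset A) * prefixWeight w (f ∘ σ) := by
        simp_rw [mul_sum, Multiset.coe_eq_coe.2 (Equiv.Perm.ofFn_comp_perm _ _)]
    _ = C (m + 1) * (m + 1).factorial *
          ∑ g : Fin (m + 1) → A, Ψ (List.ofFn g : Multiset A) * prefixWeight w g := by
        rw [Fintype.sum_sum_perm_comp (fun g => Ψ (List.ofFn g : Multiset A) * prefixWeight w g),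
          Fintype.card_fin, nsmul_eq_mul, mul_assoc]
    _ ≤ C (m + 1) * (m + 1).factorial * ((∑ α, Ψ {α}) * ∏ ℓ ∈ Ico 1 (m + 1), T ℓ) :=
        mul_le_mul_of_nonneg_left (sum_mul_prefixWeight_le hw0 hΨ hT0 hT_le m)
          (mul_nonneg (hC _).le (Nat.cast_nonneg _))
    _ = C (m + 1) * (m + 1).factorial * R * ∏ ℓ ∈ Ico 1 (m + 1), T ℓ := by
        rw [hR]; ring

/-- Bound on the cumulants of a sum of random variables admitting a
`(Ψ, C)` weighted dependency graph: `|κ_r(Σ_α Y_α)| ≤ C_r · r! · R · T₁ ⋯ T_{r-1}`. -/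
theorem cumulant_sum_le_of_isWDG
    {Ω : Type*} [MeasurableSpace Ω] (μ : Measure Ω) [IsProbabilityMeasure μ]
    {A : Type*} [Fintype A] [DecidableEq A] [Nonempty A]
    (Y : A → Ω → ℝ)
    (hint : ∀ (k : ℕ) (b : Fin k → A), Integrable (fun ω => ∏ i, Y (b i) ω) μ)
    (w : A → A → ℝ) (hsym : ∀ a b, w a b = w b a)
    (hw0 : ∀ a b, 0 ≤ w a b) (hw1 : ∀ a b, w a b ≤ 1)
    (Ψ : Multiset A → ℝ) (hΨ : ∀ B, 0 < Ψ B)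
    (C : ℕ → ℝ) (hC : ∀ k, 0 < C k)
    (hWDG : IsWDG μ Y w Ψ C)
    (R : ℝ) (hR : R = ∑ α : A, Ψ {α})
    (T : ℕ → ℝ)
    (hT : ∀ ℓ : ℕ, 1 ≤ ℓ → T ℓ = ⨆ a : Fin ℓ → A, ∑ β : A,
        Wpt w β a * (Ψ ((List.ofFn a : Multiset A) + {β}) / Ψ (List.ofFn a : Multiset A)))
    (r : ℕ) (hr : 1 ≤ r) :
    |jointCumulant μ (fun _ : Fin r => fun ω => ∑ α : A, Y α ω)| ≤
      C r * (Nat.factorial r : ℝ) * R * ∏ ℓ ∈ Finset.Ico 1 r, T ℓ :=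
  cumulant_sum_le_of_isWDG_general μ Y hint w hsym hw0 Ψ hΨ C hC hWDG R hR T hT r hr
end
end

section
/- Let (X_n)_{n≥1} be a sequence of positive integers with X_n → ∞, let ℓ ≥ 1 and let a₁,…,a_ℓ be nonnegative integers. For Δ ⊆ [ℓ] set u⁽ⁿ⁾_Δ = (X_n − Σ_{i∈Δ} a_i)!, well defined for n ≥ n₀ where X_n ≥ a₁+⋯+a_ℓ. Then the sequence (u⁽ⁿ⁾)_{n≥n₀} has the ε_n small cumulant / quasi-factorization property with ε_n = 1/X_n; in particular, for every Δ ⊆ [ℓ] with |Δ| ≥ 2 there is a constant K_Δ (depending on a₁,…,a_ℓ) such that |P_Δ(u⁽ⁿ⁾) − 1| ≤ K_Δ · X_n^{−|Δ|+1} for all n ≥ n₀. -/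
open MeasureTheory ProbabilityTheory Filter

noncomputable section

open WDGpaper

/-!
Fix `k ∈ Δ` and put `s = Δ \ {k}`. Since `M! / (M - a_k)! = ∏_{j < a_k} (M - j)`, the logarithm
of `P_Δ` at `N` is `∑_{j < a_k} ∑_{δ ⊆ s} (-1)^|δ| log (N - j - ∑_{i ∈ δ} a_i)`. Each inner sum is
an iterated difference of `log` with steps `a_i`, `i ∈ s`; by the mean value theorem, applied once
per step, it is at most `∏_{i ∈ s} a_i` times a bound for the `|s|`-th derivative of `log`, which
is `O(N^{-|s|})`. Hence `log P_Δ`, and with it `P_Δ - 1`, is `O(N^{1-|Δ|})`. At `N = 0`, the only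
point where `N^{1-|Δ|}` (read as `(N⁻¹)^(|Δ|-1)`) vanishes, all factorials are `0! = 1` and
`P_Δ = 1`, so the asymptotic bound holds with one constant for every `N`.
-/

open Finset Asymptotics Topology
open scoped Nat

def iteratedDerivLog : ℕ → ℝ → ℝ
  | 0 => Real.log
  | p + 1 => fun x => (-1) ^ p * p ! * (x ^ (p + 1))⁻¹

theorem hasDerivAt_iteratedDerivLog (p : ℕ) {x : ℝ} (hx : 0 < x) :
    HasDerivAt (iteratedDerivLog p) (iteratedDerivLog (p + 1) x) x := by
  cases p with
  | zero => simpa [iteratedDerivLog] using Real.hasDerivAt_log hx.ne'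
  | succ p =>
    refine (((hasDerivAt_pow (p + 1) x).inv (pow_ne_zero _ hx.ne')).const_mul
      ((-1 : ℝ) ^ p * p !)).congr_deriv ?_
    simp only [iteratedDerivLog, Nat.factorial_succ]
    field_simp
    push_cast
    ring

theorem abs_iteratedDerivLog_succ_le (p : ℕ) {c x : ℝ} (hc : 0 < c) (hcx : c ≤ x) :
    |iteratedDerivLog (p + 1) x| ≤ p ! / c ^ (p + 1) := by
  have hx : 0 < x := hc.trans_le hcx
  simp only [iteratedDerivLog]
  rw [abs_mul, abs_mul, abs_pow, abs_neg, abs_one, one_pow, one_mul, Nat.abs_cast, abs_inv,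
    abs_of_pos (pow_pos hx _), ← div_eq_mul_inv]
  gcongr

theorem Real.log_factorial_eq_log_factorial_sub_add_sum {k N : ℕ} (hk : k ≤ N) :
    Real.log N ! = Real.log (N - k)! + ∑ j ∈ range k, Real.log ((N : ℝ) - j) := by
  rw [← Nat.factorial_mul_descFactorial hk, Nat.cast_mul, Real.log_mul (by positivity)
    (by exact_mod_cast (Nat.descFactorial_pos.mpr hk).ne'), Nat.descFactorial_eq_prod_range,
    Nat.cast_prod, Real.log_prod fun j hj => by
      have := mem_range.mp hj; exact_mod_cast (Nat.sub_pos_of_lt (this.trans_le hk)).ne']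
  congr 1
  refine sum_congr rfl fun j hj => ?_
  rw [Nat.cast_sub ((mem_range.mp hj).le.trans hk)]

theorem Real.prod_zpow_eq_exp_sum_mul_log {α : Type*} (t : Finset α) (u : α → ℝ) (e : α → ℤ)
    (hu : ∀ i ∈ t, 0 < u i) : ∏ i ∈ t, u i ^ e i = Real.exp (∑ i ∈ t, e i * Real.log (u i)) := by
  rw [Real.exp_sum]
  refine prod_congr rfl fun i hi => ?_
  rw [← Real.rpow_intCast, Real.rpow_def_of_pos (hu i hi), mul_comm]

theorem sub_sum_mem_Icc_of_subset {ι : Type*} {a : ι → ℝ} (ha : ∀ i, 0 ≤ a i) {δ s : Finset ι}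
    (hδ : δ ⊆ s) (Z : ℝ) : Z - ∑ i ∈ δ, a i ∈ Set.Icc (Z - ∑ i ∈ s, a i) Z :=
  ⟨by linarith [sum_le_sum_of_subset_of_nonneg hδ fun i _ _ => ha i],
    by linarith [sum_nonneg fun i (_ : i ∈ δ) => ha i]⟩

/-- `P_Δ(u)` for the family `u_δ = (N - ∑_{i ∈ δ} a_i)!`. -/
def factorialAltProd {ι : Type*} (a : ι → ℕ) (Δ : Finset ι) (N : ℕ) : ℝ :=
  ∏ δ ∈ Δ.powerset, ((N - ∑ i ∈ δ, a i)! : ℝ) ^ ((-1 : ℤ) ^ #δ)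

theorem factorialAltProd_zero {ι : Type*} (a : ι → ℕ) (Δ : Finset ι) :
    factorialAltProd a Δ 0 = 1 := by
  simp [factorialAltProd]

theorem factorialAltProd_eq_exp {ι : Type*} (a : ι → ℕ) (Δ : Finset ι) (N : ℕ) :
    factorialAltProd a Δ N =
      Real.exp (∑ δ ∈ Δ.powerset, (-1) ^ #δ * Real.log (N - ∑ i ∈ δ, a i)!) := by
  rw [factorialAltProd, Real.prod_zpow_eq_exp_sum_mul_log _ _ _ fun δ _ => by positivity]
  push_cast
  rfl

section Powerset

variable {ι : Type*} [DecidableEq ι]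

theorem abs_sum_powerset_neg_one_pow_mul_le {a : ι → ℝ} (ha : ∀ i, 0 ≤ a i) (s : Finset ι)
    (g : ℕ → ℝ → ℝ) {Y B : ℝ}
    (hg : ∀ p, ∀ x ∈ Set.Icc (Y - ∑ i ∈ s, a i) Y, HasDerivAt (g p) (g (p + 1) x) x)
    (hB : ∀ x ∈ Set.Icc (Y - ∑ i ∈ s, a i) Y, |g #s x| ≤ B) :
    |∑ δ ∈ s.powerset, (-1) ^ #δ * g 0 (Y - ∑ i ∈ δ, a i)| ≤ (∏ i ∈ s, a i) * B := by
  induction s using Finset.induction_on generalizing g Y with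
  | empty => simpa using hB Y (by simp)
  | insert k s hk ih =>
    set h : ℝ → ℝ := fun Z => ∑ δ ∈ s.powerset, (-1) ^ #δ * g 0 (Z - ∑ i ∈ δ, a i)
    have hsum : ∑ i ∈ insert k s, a i = a k + ∑ i ∈ s, a i := sum_insert hk
    have hsplit : ∑ δ ∈ (insert k s).powerset, (-1) ^ #δ * g 0 (Y - ∑ i ∈ δ, a i) =
        h Y - h (Y - a k) := by
      rw [sum_powerset_insert hk, sub_eq_add_neg, ← sum_neg_distrib]
      congr 1
      refine sum_congr rfl fun δ hδ => ?_
      have hkδ : k ∉ δ := fun h => hk (mem_powerset.mp hδ h)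
      rw [card_insert_of_notMem hkδ, sum_insert hkδ, pow_succ]
      ring_nf
    have hsub : ∀ Z ∈ Set.Icc (Y - a k) Y,
        Set.Icc (Z - ∑ i ∈ s, a i) Z ⊆ Set.Icc (Y - ∑ i ∈ insert k s, a i) Y :=
      fun Z hZ x hx => ⟨by linarith [hZ.1, hx.1], hx.2.trans hZ.2⟩
    have hderiv : ∀ Z ∈ Set.Icc (Y - a k) Y, HasDerivWithinAt h
        (∑ δ ∈ s.powerset, (-1) ^ #δ * g 1 (Z - ∑ i ∈ δ, a i)) (Set.Icc (Y - a k) Y) Z := by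
      intro Z hZ
      refine (HasDerivAt.fun_sum fun δ hδ => ?_).hasDerivWithinAt
      have hZδ := hsub Z hZ (sub_sum_mem_Icc_of_subset ha (mem_powerset.mp hδ) Z)
      exact ((hg 0 _ hZδ).comp_sub_const Z _).const_mul _
    have hbound : ∀ Z ∈ Set.Icc (Y - a k) Y,
        ‖∑ δ ∈ s.powerset, (-1) ^ #δ * g 1 (Z - ∑ i ∈ δ, a i)‖ ≤ (∏ i ∈ s, a i) * B :=
      fun Z hZ => ih (fun p => g (p + 1)) (fun p x hx => hg (p + 1) x (hsub Z hZ hx))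
        (fun x hx => by simpa [card_insert_of_notMem hk] using hB x (hsub Z hZ hx))
    have hk0 := ha k
    have hmvt := (convex_Icc (Y - a k) Y).norm_image_sub_le_of_norm_hasDerivWithin_le hderiv hbound
      (Set.left_mem_Icc.mpr (by linarith)) (Set.right_mem_Icc.mpr (by linarith))
    rw [hsplit, prod_insert hk]
    simp only [Real.norm_eq_abs, sub_sub_cancel, abs_of_nonneg hk0] at hmvt
    linarith

theorem abs_sum_powerset_neg_one_pow_mul_log_le {a : ι → ℝ} (ha : ∀ i, 0 ≤ a i) {s : Finset ι}
    (hs : s.Nonempty) {c Y : ℝ} (hc : 0 < c) (hcY : c ≤ Y - ∑ i ∈ s, a i) :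
    |∑ δ ∈ s.powerset, (-1) ^ #δ * Real.log (Y - ∑ i ∈ δ, a i)| ≤
      (∏ i ∈ s, a i) * ((#s - 1)! / c ^ #s) := by
  obtain ⟨p, hp⟩ := Nat.exists_eq_succ_of_ne_zero hs.card_pos.ne'
  rw [hp, Nat.succ_sub_one]
  exact abs_sum_powerset_neg_one_pow_mul_le ha s iteratedDerivLog
    (fun q x hx => hasDerivAt_iteratedDerivLog q (hc.trans_le (hcY.trans hx.1)))
    (fun x hx => by rw [hp]; exact abs_iteratedDerivLog_succ_le p hc (hcY.trans hx.1))

theorem sum_powerset_insert_neg_one_pow_mul_log_factorial (a : ι → ℕ) {k : ι} {s : Finset ι}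
    (hk : k ∉ s) {N : ℕ} (hN : ∑ i ∈ insert k s, a i ≤ N) :
    ∑ δ ∈ (insert k s).powerset, (-1) ^ #δ * Real.log (N - ∑ i ∈ δ, a i)! =
      ∑ j ∈ range (a k), ∑ δ ∈ s.powerset,
        (-1) ^ #δ * Real.log ((N - j : ℝ) - ∑ i ∈ δ, (a i : ℝ)) := by
  rw [sum_powerset_insert hk, sum_comm, ← sum_add_distrib]
  refine sum_congr rfl fun δ hδ => ?_
  have hδs := mem_powerset.mp hδ
  have hkδ : k ∉ δ := fun h => hk (hδs h)
  have hle : ∑ i ∈ δ, a i + a k ≤ N := by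
    rw [sum_insert hk] at hN; linarith [sum_le_sum_of_subset hδs (f := a)]
  rw [card_insert_of_notMem hkδ, sum_insert hkδ, pow_succ, ← mul_sum,
    Real.log_factorial_eq_log_factorial_sub_add_sum (k := a k) (N := N - ∑ i ∈ δ, a i) (by omega),
    Nat.sub_sub, add_comm (a k)]
  have hcast : ∀ j, ((N - ∑ i ∈ δ, a i : ℕ) : ℝ) - j = (N - j : ℝ) - ∑ i ∈ δ, (a i : ℝ) := by
    intro j; rw [Nat.cast_sub (by omega)]; push_cast; ring
  simp only [hcast]
  ring

theorem abs_sum_powerset_insert_neg_one_pow_mul_log_factorial_le (a : ι → ℕ) {k : ι}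
    {s : Finset ι} (hk : k ∉ s) (hs : s.Nonempty) {N : ℕ} (hN0 : 0 < N)
    (hN : 2 * ∑ i ∈ insert k s, a i ≤ N) :
    |∑ δ ∈ (insert k s).powerset, (-1) ^ #δ * Real.log (N - ∑ i ∈ δ, a i)!| ≤
      a k * ((∏ i ∈ s, (a i : ℝ)) * ((#s - 1)! / ((N : ℝ) / 2) ^ #s)) := by
  rw [sum_powerset_insert_neg_one_pow_mul_log_factorial a hk (by omega)]
  refine (abs_sum_le_sum_abs _ _).trans ((sum_le_card_nsmul _ _
    ((∏ i ∈ s, (a i : ℝ)) * ((#s - 1)! / ((N : ℝ) / 2) ^ #s)) fun j hj => ?_).trans_eq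
    (by rw [card_range, nsmul_eq_mul]))
  refine abs_sum_powerset_neg_one_pow_mul_log_le (fun i => Nat.cast_nonneg (a i)) hs
    (by positivity) ?_
  have hj : (j : ℝ) + 1 ≤ a k := by exact_mod_cast mem_range.mp hj
  have hN' : 2 * ((a k : ℝ) + ∑ i ∈ s, (a i : ℝ)) ≤ N := by
    rw [sum_insert hk] at hN; exact_mod_cast hN
  linarith

theorem isBigO_factorialAltProd_sub_one (a : ι → ℕ) {Δ : Finset ι} (hΔ : 2 ≤ #Δ) :
    (fun N => factorialAltProd a Δ N - 1) =O[atTop] fun N => ((N : ℝ)⁻¹) ^ (#Δ - 1) := by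
  obtain ⟨k, s, hk, rfl, hcard⟩ := card_eq_succ.mp (Nat.sub_add_cancel (by omega : 1 ≤ #Δ)).symm
  rw [← hcard]
  have hs : s.Nonempty := card_pos.mp (by omega)
  set L : ℕ → ℝ := fun N => ∑ δ ∈ (insert k s).powerset, (-1) ^ #δ * Real.log (N - ∑ i ∈ δ, a i)!
  have hL : L =O[atTop] fun N => ((N : ℝ)⁻¹) ^ #s := by
    refine IsBigO.of_bound (a k * (∏ i ∈ s, (a i : ℝ)) * (#s - 1)! * 2 ^ #s) ?_
    filter_upwards [eventually_ge_atTop (max 1 (2 * ∑ i ∈ insert k s, a i))] with N hN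
    rw [Real.norm_eq_abs, norm_pow, norm_inv, Real.norm_natCast]
    refine (abs_sum_powerset_insert_neg_one_pow_mul_log_factorial_le a hk hs (by omega)
      (by omega)).trans_eq ?_
    rw [div_pow, div_div_eq_mul_div, inv_pow]
    field_simp
  have hL0 : Tendsto L atTop (𝓝 0) := by
    refine hL.trans_tendsto ?_
    have := (tendsto_inv_atTop_zero.comp (tendsto_natCast_atTop_atTop (R := ℝ))).pow #s
    rwa [zero_pow hs.card_pos.ne'] at this
  have hexp : (fun N => Real.exp (L N) - 1) =O[atTop] L := by
    have := (Real.hasDerivAt_exp 0).isBigO_sub.comp_tendsto hL0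
    simpa only [Function.comp_def, Real.exp_zero, sub_zero] using this
  simpa only [factorialAltProd_eq_exp] using hexp.trans hL

end Powerset

theorem factorial_sequences_quasiFactorization_general
    (ℓ : ℕ) (X : ℕ → ℕ) (a : Fin ℓ → ℕ) (n₀ : ℕ) :
    ∀ Δ : Finset (Fin ℓ), 2 ≤ Δ.card → ∃ K : ℝ, ∀ n, n₀ ≤ n →
      |(∏ δ ∈ Δ.powerset,
          ((Nat.factorial (X n - ∑ i ∈ δ, a i) : ℝ)) ^ ((-1 : ℤ) ^ δ.card)) - 1|
        ≤ K * ((X n : ℝ)⁻¹) ^ (Δ.card - 1) := by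
  intro Δ hΔ
  have hzero (N : ℕ) (hN : ((N : ℝ)⁻¹) ^ (#Δ - 1) = 0) : factorialAltProd a Δ N - 1 = 0 := by
    have hN0 := inv_eq_zero.mp ((pow_eq_zero_iff (n := #Δ - 1) (by omega)).mp hN)
    obtain rfl : N = 0 := by exact_mod_cast hN0
    rw [factorialAltProd_zero, sub_self]
  obtain ⟨K, hK⟩ := (isBigO_nat_atTop_iff hzero).mp (isBigO_factorialAltProd_sub_one a hΔ)
  refine ⟨K, fun n _ => ?_⟩
  simpa only [factorialAltProd, Real.norm_eq_abs, norm_pow, norm_inv, Nat.abs_cast] using hK (X n)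

/-- The factorial sequences `u⁽ⁿ⁾_Δ = (X_n − Σ_{i∈Δ} a_i)!` have the
`1/X_n` quasi-factorization (small cumulant) property: for every `Δ` with `|Δ| ≥ 2`,
`|P_Δ(u⁽ⁿ⁾) − 1| ≤ K_Δ · X_n^{−|Δ|+1}`. -/
theorem factorial_sequences_quasiFactorization
    (ℓ : ℕ) (hℓ : 1 ≤ ℓ) (X : ℕ → ℕ) (hX1 : ∀ n, 1 ≤ X n)
    (hXtop : Tendsto X atTop atTop)
    (a : Fin ℓ → ℕ) (n₀ : ℕ) (hn₀ : ∀ n, n₀ ≤ n → ∑ i, a i ≤ X n) :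
    ∀ Δ : Finset (Fin ℓ), 2 ≤ Δ.card → ∃ K : ℝ, ∀ n, n₀ ≤ n →
      |(∏ δ ∈ Δ.powerset,
          ((Nat.factorial (X n - ∑ i ∈ δ, a i) : ℝ)) ^ ((-1 : ℤ) ^ δ.card)) - 1|
        ≤ K * ((X n : ℝ)⁻¹) ^ (Δ.card - 1) :=
  factorial_sequences_quasiFactorization_general ℓ X a n₀
end
end
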